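/- The degree-3 component of the ideal generated by ω, namely ⟨⟨ω⟩⟩ ∩ 𝔏₃, is exactly the image [ω,H] of the map H → 𝔏₃ given by h ↦ [ω,h], and this map h ↦ [ω,h] is injective. -/

import Mathlib

/-!
Let `Q = ℤω + [ω, H] + 𝔏_{≥4}`. Bracketing with a generator sends `ω` into `[ω, H]`, `[ω, H]`
into `𝔏₄` and `𝔏_{≥4}` into itself; since the generators generate `𝔏`, `Q` is an ideal, so
`⟨⟨ω⟩⟩ ⊆ Q`. To isolate degree `3`, embed `𝔏` into the free associative ring on the generators,
graded by word length, and map words of length `3` back to `𝔏` by an explicit `ℤ`-linear map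
that is a left inverse on triple brackets. The composite is a linear map `𝔏 → 𝔏` fixing `𝔏₃`
and killing every `𝔏ₖ` with `k ≠ 3`; applied to an element of `⟨⟨ω⟩⟩ ∩ 𝔏₃` it leaves only the
`[ω, H]` component.

For injectivity, the coefficient of the word `a₁ b₁ x` in the image of `[ω, h]` is the
`x`-coordinate of `h` (twice it when `x = a₁`).
-/

open scoped TensorProduct

noncomputable section

/-- The free Lie ring `𝔏` on the `2g` generators. -/
abbrev L (g : ℕ) : Type := FreeLieAlgebra ℤ (Fin (2 * g))

/-- The free abelian group `H` of rank `2g`. -/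
abbrev H (g : ℕ) : Type := Fin (2 * g) → ℤ

/-- The canonical inclusion of `H` into `𝔏` as the degree `1` part. -/
def toL (g : ℕ) : H g →ₗ[ℤ] L g where
  toFun v := ∑ i, v i • FreeLieAlgebra.of ℤ i
  map_add' x y := by simp [add_smul, Finset.sum_add_distrib]
  map_smul' c x := by simp [Finset.smul_sum, smul_smul]

/-- Index of the basis element `aᵢ`. -/
def aIdx (g : ℕ) (i : Fin g) : Fin (2 * g) := ⟨i.1, by have := i.2; omega⟩

/-- Index of the basis element `bᵢ`. -/
def bIdx (g : ℕ) (i : Fin g) : Fin (2 * g) := ⟨g + i.1, by have := i.2; omega⟩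

/-- The basis element `aᵢ` of `H`. -/
def aV (g : ℕ) (i : Fin g) : H g := Pi.single (aIdx g i) 1

/-- The basis element `bᵢ` of `H`. -/
def bV (g : ℕ) (i : Fin g) : H g := Pi.single (bIdx g i) 1

/-- The symplectic pairing `ω : H × H → ℤ`, with `ω(aᵢ,bⱼ) = δᵢⱼ`, `ω(aᵢ,aⱼ) = ω(bᵢ,bⱼ) = 0`. -/
def omegaPair (g : ℕ) (x y : H g) : ℤ :=
  ∑ i : Fin g, (x (aIdx g i) * y (bIdx g i) - x (bIdx g i) * y (aIdx g i))

/-- `IsBrkt g k x` means that `x` is a `k`-fold Lie bracket of elements of `H`. -/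
inductive IsBrkt (g : ℕ) : ℕ → L g → Prop
  | of (v : H g) : IsBrkt g 1 (toL g v)
  | lie {m n : ℕ} {x y : L g} : IsBrkt g m x → IsBrkt g n y → IsBrkt g (m + n) ⁅x, y⁆

/-- `𝔏ₖ`, the degree-`k` homogeneous component of the free Lie ring:
the `ℤ`-span of all `k`-fold Lie brackets of elements of `H`. -/
def homog (g k : ℕ) : Submodule ℤ (L g) := Submodule.span ℤ {x | IsBrkt g k x}

lemma toL_mem (g : ℕ) (v : H g) : toL g v ∈ homog g 1 :=
  Submodule.subset_span (IsBrkt.of v)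

lemma lie_mem_homog {g m n : ℕ} {x y : L g} (hx : x ∈ homog g m) (hy : y ∈ homog g n) :
    ⁅x, y⁆ ∈ homog g (m + n) := by
  induction hx using Submodule.span_induction with
  | mem a ha =>
    induction hy using Submodule.span_induction with
    | mem b hb => exact Submodule.subset_span (ha.lie hb)
    | zero => simp
    | add b c hb hc ihb ihc => rw [lie_add]; exact Submodule.add_mem _ ihb ihc
    | smul t b hb ihb => rw [lie_smul]; exact Submodule.smul_mem _ t ihb
  | zero => simp
  | add a c ha hc iha ihc => rw [add_lie]; exact Submodule.add_mem _ iha ihc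
  | smul t a ha iha => rw [smul_lie]; exact Submodule.smul_mem _ t iha

/-- `[[a,b],c]` as an element of `𝔏₃`. -/
def trip (g : ℕ) (a b c : H g) : ↥(homog g 3) :=
  ⟨⁅⁅toL g a, toL g b⁆, toL g c⁆,
    Submodule.subset_span (((IsBrkt.of a).lie (IsBrkt.of b)).lie (IsBrkt.of c))⟩

/-- The symplectic element `ω = Σᵢ [aᵢ, bᵢ] ∈ 𝔏₂`. -/
def omegaL (g : ℕ) : L g := ∑ i : Fin g, ⁅toL g (aV g i), toL g (bV g i)⁆

lemma omegaL_mem (g : ℕ) : omegaL g ∈ homog g 2 :=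
  Submodule.sum_mem _ fun i _ =>
    Submodule.subset_span ((IsBrkt.of (aV g i)).lie (IsBrkt.of (bV g i)))

/-- The Lie ideal `⟨⟨ω⟩⟩` of `𝔏` generated by `ω`. -/
def omegaIdeal (g : ℕ) : LieIdeal ℤ (L g) := LieSubmodule.lieSpan ℤ (L g) {omegaL g}

end

namespace FreeLieAlgebra

variable {R X : Type*} [CommRing R]

lemma mem_of_forall_of_mem (S : LieSubalgebra R (FreeLieAlgebra R X)) (h : ∀ x, of R x ∈ S)
    (y : FreeLieAlgebra R X) : y ∈ S := by
  let f : FreeLieAlgebra R X →ₗ⁅R⁆ S := lift R fun x => ⟨of R x, h x⟩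
  have hf : S.incl.comp f = LieHom.id := hom_ext fun x => by simp [f]
  have hy : (f y : FreeLieAlgebra R X) = y := LieHom.congr_fun hf y
  exact hy ▸ (f y).2

lemma lie_mem_of_forall_lie_of_mem {N : Submodule R (FreeLieAlgebra R X)}
    (hN : ∀ x : X, ∀ n ∈ N, ⁅of R x, n⁆ ∈ N) (y : FreeLieAlgebra R X) {n : FreeLieAlgebra R X}
    (hn : n ∈ N) : ⁅y, n⁆ ∈ N := by
  let S : LieSubalgebra R (FreeLieAlgebra R X) :=
    { carrier := {y | ∀ n ∈ N, ⁅y, n⁆ ∈ N}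
      add_mem' := fun ha hb n hn => by rw [add_lie]; exact add_mem (ha n hn) (hb n hn)
      zero_mem' := fun n _ => by rw [zero_lie]; exact zero_mem N
      smul_mem' := fun t a ha n hn => by rw [smul_lie]; exact N.smul_mem t (ha n hn)
      lie_mem' := fun ha hb n hn => by
        rw [lie_lie]; exact sub_mem (ha _ (hb n hn)) (hb _ (ha n hn)) }
  exact mem_of_forall_of_mem S hN y n hn

end FreeLieAlgebra

noncomputable section

section FreeAssocRing

open FreeLieAlgebra

variable {X : Type*}

abbrev FreeAssocRing (X : Type*) : Type _ := MonoidAlgebra ℤ (FreeMonoid X)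

instance : LieRing (FreeAssocRing X) := LieRing.ofAssociativeRing

def toFreeAssocRing : FreeLieAlgebra ℤ X →ₗ⁅ℤ⁆ FreeAssocRing X :=
  lift ℤ fun x => MonoidAlgebra.single (FreeMonoid.of x) 1

lemma toFreeAssocRing_of (x : X) :
    toFreeAssocRing (of ℤ x) = MonoidAlgebra.single (FreeMonoid.of x) 1 :=
  lift_of_apply _ x

lemma toFreeAssocRing_lie (a b : FreeLieAlgebra ℤ X) :
    toFreeAssocRing ⁅a, b⁆ =
      toFreeAssocRing a * toFreeAssocRing b - toFreeAssocRing b * toFreeAssocRing a := by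
  rw [LieHom.map_lie, Ring.lie_def]

lemma toFreeAssocRing_lie_lie_of (p q r : X) :
    toFreeAssocRing ⁅⁅of ℤ p, of ℤ q⁆, of ℤ r⁆ =
      MonoidAlgebra.single (FreeMonoid.ofList [p, q, r]) 1
        - MonoidAlgebra.single (FreeMonoid.ofList [q, p, r]) 1
        - MonoidAlgebra.single (FreeMonoid.ofList [r, p, q]) 1
        + MonoidAlgebra.single (FreeMonoid.ofList [r, q, p]) 1 := by
  simp only [toFreeAssocRing_lie, toFreeAssocRing_of, sub_mul, mul_sub,
    MonoidAlgebra.single_mul_single, one_mul]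
  have hl (a b c : X) :
      FreeMonoid.of a * FreeMonoid.of b * FreeMonoid.of c = .ofList [a, b, c] := rfl
  have hr (a b c : X) :
      FreeMonoid.of a * (FreeMonoid.of b * FreeMonoid.of c) = .ofList [a, b, c] := rfl
  simp only [hl, hr]
  abel

def wordSpan (X : Type*) (k : ℕ) : Submodule ℤ (FreeAssocRing X) :=
  Submodule.span ℤ ((MonoidAlgebra.single · 1) '' {w : FreeMonoid X | w.length = k})

lemma mul_mem_wordSpan {m n : ℕ} {a b : FreeAssocRing X} (ha : a ∈ wordSpan X m)
    (hb : b ∈ wordSpan X n) : a * b ∈ wordSpan X (m + n) := by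
  have hab := Submodule.mul_mem_mul ha hb
  rw [wordSpan, wordSpan, Submodule.span_mul_span] at hab
  refine Submodule.span_mono ?_ hab
  rintro _ ⟨_, ⟨v, rfl : v.length = m, rfl⟩, _, ⟨w, rfl : w.length = n, rfl⟩, rfl⟩
  exact ⟨v * w, FreeMonoid.length_mul v w, by simp [MonoidAlgebra.single_mul_single]⟩

variable [LinearOrder X]

/-- Chosen so that `lieOfAssoc ∘ toFreeAssocRing` fixes every triple bracket `⁅⁅p, q⁆, r⁆`: of
its four words, those not sent to `0` recombine to it by the Jacobi identity. -/
def lieOfWord (w : FreeMonoid X) : FreeLieAlgebra ℤ X :=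
  match w.toList with
  | [x, y, z] =>
    if (x < y ∧ x < z) ∨ (y < x ∧ y = z) then ⁅⁅of ℤ x, of ℤ y⁆, of ℤ z⁆ else 0
  | _ => 0

lemma lieOfWord_ofList (x y z : X) : lieOfWord (.ofList [x, y, z]) =
    if (x < y ∧ x < z) ∨ (y < x ∧ y = z) then ⁅⁅of ℤ x, of ℤ y⁆, of ℤ z⁆ else 0 := rfl

lemma lieOfWord_of_length_ne {w : FreeMonoid X} (hw : w.length ≠ 3) : lieOfWord w = 0 := by
  unfold lieOfWord
  match hw' : w.toList, hw with
  | [], _ | [_], _ | [_, _], _ | _ :: _ :: _ :: _ :: _, _ => rfl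
  | [_, _, _], h => exact absurd (by simp [FreeMonoid.length, hw']) h

def lieOfAssoc : FreeAssocRing X →ₗ[ℤ] FreeLieAlgebra ℤ X :=
  (MonoidAlgebra.basis (FreeMonoid X) ℤ).constr ℤ lieOfWord

lemma lieOfAssoc_single (w : FreeMonoid X) :
    lieOfAssoc (MonoidAlgebra.single w 1) = lieOfWord w :=
  (MonoidAlgebra.basis (FreeMonoid X) ℤ).constr_basis ℤ lieOfWord w

lemma wordSpan_le_ker_lieOfAssoc {k : ℕ} (hk : k ≠ 3) :
    wordSpan X k ≤ LinearMap.ker lieOfAssoc :=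
  Submodule.span_le.2 <| by
    rintro _ ⟨w, hw, rfl⟩
    exact (lieOfAssoc_single w).trans (lieOfWord_of_length_ne (hw ▸ hk))

def projDegThree : FreeLieAlgebra ℤ X →ₗ[ℤ] FreeLieAlgebra ℤ X :=
  lieOfAssoc ∘ₗ toFreeAssocRing.toLinearMap

lemma projDegThree_lie_lie_of_of_lt {p q : X} (h : q < p) (r : X) :
    projDegThree ⁅⁅of ℤ p, of ℤ q⁆, of ℤ r⁆ = ⁅⁅of ℤ p, of ℤ q⁆, of ℤ r⁆ := by
  simp only [projDegThree, LinearMap.comp_apply, LieHom.coe_toLinearMap,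
    toFreeAssocRing_lie_lie_of, map_add, map_sub, lieOfAssoc_single, lieOfWord_ofList]
  rcases lt_trichotomy r q with hr | rfl | hr <;> split_ifs <;> try (exfalso; grind)
  · have swap (x y z : FreeLieAlgebra ℤ X) : ⁅⁅x, y⁆, z⁆ = ⁅z, ⁅y, x⁆⁆ := by
      rw [← lie_skew x, neg_lie, lie_skew]
    rw [lie_lie (of ℤ p), swap (of ℤ r) (of ℤ p), swap (of ℤ r) (of ℤ q)]
    abel
  · abel
  · rw [← lie_skew (of ℤ p), neg_lie]
    abel

lemma projDegThree_lie_lie_of (p q r : X) :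
    projDegThree ⁅⁅of ℤ p, of ℤ q⁆, of ℤ r⁆ = ⁅⁅of ℤ p, of ℤ q⁆, of ℤ r⁆ := by
  rcases lt_trichotomy p q with h | rfl | h
  · rw [← lie_skew (of ℤ p) (of ℤ q), neg_lie, map_neg, projDegThree_lie_lie_of_of_lt h]
  · simp
  · exact projDegThree_lie_lie_of_of_lt h r

end FreeAssocRing

section Degree

open FreeLieAlgebra

variable {g : ℕ}

lemma toL_apply (v : H g) : toL g v = ∑ i, v i • of ℤ i := rfl

lemma toL_single (i : Fin (2 * g)) : toL g (Pi.single i 1) = of ℤ i := by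
  simp [toL_apply, Pi.single_apply]

lemma IsBrkt.one_le {k : ℕ} {x : L g} (h : IsBrkt g k x) : 1 ≤ k := by
  induction h <;> omega

lemma IsBrkt.exists_eq_toL {k : ℕ} {x : L g} (h : IsBrkt g k x) (hk : k = 1) :
    ∃ v, x = toL g v := by
  cases h with
  | of v => exact ⟨v, rfl⟩
  | lie hm hn => have := hm.one_le; have := hn.one_le; omega

lemma IsBrkt.exists_eq_lie_toL {k : ℕ} {x : L g} (h : IsBrkt g k x) (hk : k = 2) :
    ∃ a b, x = ⁅toL g a, toL g b⁆ := by
  cases h with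
  | of v => omega
  | lie hm hn =>
    have := hm.one_le; have := hn.one_le
    obtain ⟨a, rfl⟩ := hm.exists_eq_toL (by omega)
    obtain ⟨b, rfl⟩ := hn.exists_eq_toL (by omega)
    exact ⟨a, b, rfl⟩

lemma IsBrkt.exists_eq_triple_lie_toL {k : ℕ} {x : L g} (h : IsBrkt g k x) (hk : k = 3) :
    ∃ a b c, x = ⁅⁅toL g a, toL g b⁆, toL g c⁆ ∨ x = ⁅toL g a, ⁅toL g b, toL g c⁆⁆ := by
  cases h with
  | of v => omega
  | @lie m n y z hm hn =>
    have := hm.one_le; have := hn.one_le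
    obtain ⟨hm1, hn2⟩ | ⟨hm2, hn1⟩ : (m = 1 ∧ n = 2) ∨ (m = 2 ∧ n = 1) := by omega
    · obtain ⟨a, rfl⟩ := hm.exists_eq_toL hm1
      obtain ⟨b, c, rfl⟩ := hn.exists_eq_lie_toL hn2
      exact ⟨a, b, c, Or.inr rfl⟩
    · obtain ⟨a, b, rfl⟩ := hm.exists_eq_lie_toL hm2
      obtain ⟨c, rfl⟩ := hn.exists_eq_toL hn1
      exact ⟨a, b, c, Or.inl rfl⟩

lemma projDegThree_lie_lie_toL (a b c : H g) :
    projDegThree ⁅⁅toL g a, toL g b⁆, toL g c⁆ = ⁅⁅toL g a, toL g b⁆, toL g c⁆ := by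
  simp only [toL_apply, sum_lie, lie_sum, smul_lie, lie_smul, map_sum, map_smul,
    projDegThree_lie_lie_of]

lemma projDegThree_of_mem_homog_three {x : L g} (hx : x ∈ homog g 3) : projDegThree x = x := by
  induction hx using Submodule.span_induction with
  | mem x hx =>
    obtain ⟨a, b, c, rfl | rfl⟩ := hx.exists_eq_triple_lie_toL rfl
    · exact projDegThree_lie_lie_toL a b c
    · rw [← lie_skew, map_neg, projDegThree_lie_lie_toL]
  | zero => exact map_zero _
  | add x y _ _ hx hy => rw [map_add, hx, hy]
  | smul t x _ hx => rw [map_smul, hx]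

lemma IsBrkt.toFreeAssocRing_mem_wordSpan {k : ℕ} {x : L g} (h : IsBrkt g k x) :
    toFreeAssocRing x ∈ wordSpan (Fin (2 * g)) k := by
  induction h with
  | of v =>
    simp only [toL_apply, map_sum, map_smul, toFreeAssocRing_of]
    exact Submodule.sum_mem _ fun i _ => Submodule.smul_mem _ _
      (Submodule.subset_span ⟨FreeMonoid.of i, FreeMonoid.length_of i, rfl⟩)
  | @lie m n x y _ _ hx hy =>
    rw [toFreeAssocRing_lie]
    exact sub_mem (mul_mem_wordSpan hx hy) (add_comm n m ▸ mul_mem_wordSpan hy hx)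

lemma homog_le_ker_projDegThree {k : ℕ} (hk : k ≠ 3) :
    homog g k ≤ LinearMap.ker (projDegThree : L g →ₗ[ℤ] L g) :=
  Submodule.span_le.2 fun _ hx => wordSpan_le_ker_lieOfAssoc hk hx.toFreeAssocRing_mem_wordSpan

def homogGE (g n : ℕ) : Submodule ℤ (L g) := Submodule.span ℤ {x | ∃ k, n ≤ k ∧ IsBrkt g k x}

lemma homogGE_anti {m n : ℕ} (h : m ≤ n) : homogGE g n ≤ homogGE g m :=
  Submodule.span_mono fun _ ⟨k, hk, hx⟩ => ⟨k, h.trans hk, hx⟩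

lemma homog_le_homogGE {n k : ℕ} (h : n ≤ k) : homog g k ≤ homogGE g n :=
  Submodule.span_mono fun _ hx => ⟨k, h, hx⟩

lemma lie_toL_mem_homogGE (v : H g) {n : ℕ} {x : L g} (hx : x ∈ homogGE g n) :
    ⁅toL g v, x⁆ ∈ homogGE g (n + 1) := by
  induction hx using Submodule.span_induction with
  | mem x hx =>
    obtain ⟨k, hk, hx⟩ := hx
    exact Submodule.subset_span ⟨1 + k, by omega, (IsBrkt.of v).lie hx⟩
  | zero => rw [lie_zero]; exact zero_mem _
  | add x y _ _ hx hy => rw [lie_add]; exact add_mem hx hy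
  | smul t x _ hx => rw [lie_smul]; exact Submodule.smul_mem _ t hx

lemma homogGE_le_ker_projDegThree {n : ℕ} (hn : 3 < n) :
    homogGE g n ≤ LinearMap.ker (projDegThree : L g →ₗ[ℤ] L g) :=
  Submodule.span_le.2 fun _ ⟨_, hk, hx⟩ =>
    homog_le_ker_projDegThree (by omega) (Submodule.subset_span hx)

end Degree

end

noncomputable section

/-- The map `H → 𝔏`, `h ↦ [ω, h]`. -/
def adOmega (g : ℕ) : H g →ₗ[ℤ] L g :=
  (LieAlgebra.ad ℤ (L g) (omegaL g)).comp (toL g)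

section OmegaIdeal

open FreeLieAlgebra

variable {g : ℕ}

lemma adOmega_apply (v : H g) : adOmega g v = ⁅omegaL g, toL g v⁆ := rfl

lemma adOmega_mem_homog (v : H g) : adOmega g v ∈ homog g 3 := by
  rw [adOmega_apply]
  exact lie_mem_homog (m := 2) (n := 1) (omegaL_mem g) (toL_mem g v)

lemma adOmega_mem_omegaIdeal (v : H g) : adOmega g v ∈ omegaIdeal g := by
  rw [adOmega_apply]
  exact lie_mem_left ℤ (L g) (omegaIdeal g) _ _ (LieSubmodule.subset_lieSpan rfl)

def omegaIdealBound (g : ℕ) : Submodule ℤ (L g) :=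
  Submodule.span ℤ {omegaL g} ⊔ LinearMap.range (adOmega g) ⊔ homogGE g 4

lemma lie_of_mem_omegaIdealBound (i : Fin (2 * g)) {x : L g} (hx : x ∈ omegaIdealBound g) :
    ⁅of ℤ i, x⁆ ∈ omegaIdealBound g := by
  obtain ⟨y, hy, w, hw, rfl⟩ := Submodule.mem_sup.1 hx
  obtain ⟨s, hs, _, ⟨v, rfl⟩, rfl⟩ := Submodule.mem_sup.1 hy
  obtain ⟨c, rfl⟩ := Submodule.mem_span_singleton.1 hs
  rw [← toL_single, lie_add, lie_add, lie_smul]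
  refine add_mem (add_mem ?_ ?_) ?_
  · have hω : ⁅toL g (Pi.single i 1), omegaL g⁆ = adOmega g (-Pi.single i 1) := by
      rw [map_neg, adOmega_apply, lie_skew]
    exact Submodule.smul_mem _ c (Submodule.mem_sup_left (Submodule.mem_sup_right ⟨_, hω.symm⟩))
  · exact Submodule.mem_sup_right <| homog_le_homogGE le_rfl <|
      lie_mem_homog (m := 1) (n := 3) (toL_mem g _) (adOmega_mem_homog v)
  · exact Submodule.mem_sup_right (homogGE_anti (by omega) (lie_toL_mem_homogGE _ hw))

lemma omegaIdeal_le_omegaIdealBound : (omegaIdeal g).toSubmodule ≤ omegaIdealBound g := by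
  let I : LieIdeal ℤ (L g) :=
    { omegaIdealBound g with
      lie_mem := fun hx =>
        lie_mem_of_forall_lie_of_mem (fun i _ => lie_of_mem_omegaIdealBound i) _ hx }
  have hI : omegaIdeal g ≤ I := LieSubmodule.lieSpan_le.2 <| Set.singleton_subset_iff.2 <|
    Submodule.mem_sup_left (Submodule.mem_sup_left (Submodule.mem_span_singleton_self _))
  exact hI

lemma omegaIdeal_inf_homog_three (g : ℕ) :
    (omegaIdeal g).toSubmodule ⊓ homog g 3 = LinearMap.range (adOmega g) := by
  refine le_antisymm ?_ ?_
  · rintro x ⟨hxI, hx3⟩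
    obtain ⟨y, hy, w, hw, rfl⟩ := Submodule.mem_sup.1 (omegaIdeal_le_omegaIdealBound hxI)
    obtain ⟨s, hs, _, ⟨v, rfl⟩, rfl⟩ := Submodule.mem_sup.1 hy
    obtain ⟨c, rfl⟩ := Submodule.mem_span_singleton.1 hs
    have hω := LinearMap.mem_ker.1 (homog_le_ker_projDegThree (by norm_num) (omegaL_mem g))
    have hw := LinearMap.mem_ker.1 (homogGE_le_ker_projDegThree (by norm_num) hw)
    rw [← projDegThree_of_mem_homog_three hx3, map_add, map_add, map_smul, hω, hw,
      projDegThree_of_mem_homog_three (adOmega_mem_homog v), smul_zero, zero_add, add_zero]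
    exact ⟨v, rfl⟩
  · rintro _ ⟨v, rfl⟩
    exact ⟨adOmega_mem_omegaIdeal v, adOmega_mem_homog v⟩

lemma adOmega_eq_sum (v : H g) :
    adOmega g v = ∑ i : Fin g, ∑ k, v k • ⁅⁅of ℤ (aIdx g i), of ℤ (bIdx g i)⁆, of ℤ k⁆ := by
  rw [adOmega_apply, omegaL, sum_lie]
  refine Finset.sum_congr rfl fun i _ => ?_
  rw [aV, bV, toL_single, toL_single, toL_apply, lie_sum]
  simp only [lie_smul]

lemma aIdx_injective : Function.Injective (aIdx g) := fun i j h => by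
  simpa [aIdx, Fin.ext_iff] using h

lemma bIdx_injective : Function.Injective (bIdx g) := fun i j h => by
  simpa [bIdx, Fin.ext_iff] using h

lemma aIdx_ne_bIdx (i j : Fin g) : aIdx g i ≠ bIdx g j := by
  simp [aIdx, bIdx, Fin.ext_iff]; omega

lemma coeff_toFreeAssocRing_adOmega (v : H g) (i₀ : Fin g) (j : Fin (2 * g)) :
    (toFreeAssocRing (adOmega g v)).coeff (.ofList [aIdx g i₀, bIdx g i₀, j]) =
      v j + if j = aIdx g i₀ then v j else 0 := by
  classical
  simp only [adOmega_eq_sum, map_sum, map_smul, toFreeAssocRing_lie_lie_of,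
    MonoidAlgebra.coeff_sum, Finsupp.finsetSum_apply, MonoidAlgebra.coeff_smul_apply,
    MonoidAlgebra.coeff_add, MonoidAlgebra.coeff_sub, Finsupp.add_apply, Finsupp.sub_apply,
    MonoidAlgebra.coeff_single, Finsupp.single_apply]
  simp only [Equiv.apply_eq_iff_eq, List.cons.injEq, aIdx_injective.eq_iff, bIdx_injective.eq_iff,
    aIdx_ne_bIdx, (aIdx_ne_bIdx _ _).symm, and_true, false_and, and_false, if_false]
  simp only [sub_zero, smul_eq_mul, mul_add, Finset.sum_add_distrib, ite_and, mul_ite, mul_one,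
    mul_zero, Finset.sum_ite_irrel, Finset.sum_ite_eq', Finset.sum_const_zero, Finset.mem_univ,
    if_true]
  rcases eq_or_ne j (aIdx g i₀) with rfl | h
  · simp
  · simp [h, h.symm]

lemma adOmega_injective : Function.Injective (adOmega g) := by
  refine (injective_iff_map_eq_zero _).2 fun v hv => funext fun j => ?_
  have h := coeff_toFreeAssocRing_adOmega v ⟨0, by have := j.2; omega⟩ j
  rw [hv, map_zero, MonoidAlgebra.coeff_zero, Finsupp.zero_apply] at h
  split_ifs at h <;> simp only [Pi.zero_apply] <;> omega

end OmegaIdeal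

theorem stmt6_general (g : ℕ) :
    (omegaIdeal g).toSubmodule ⊓ homog g 3 = LinearMap.range (adOmega g) ∧
    Function.Injective (adOmega g) :=
  ⟨omegaIdeal_inf_homog_three g, adOmega_injective⟩

/-- `⟨⟨ω⟩⟩ ∩ 𝔏₃` is exactly the image `[ω,H]` of the map `h ↦ [ω,h]`,
and this map is injective. -/
theorem stmt6 (g : ℕ) (hg : 1 ≤ g) :
    (omegaIdeal g).toSubmodule ⊓ homog g 3 = LinearMap.range (adOmega g) ∧
    Function.Injective (adOmega g) :=
  stmt6_general g

end
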